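/- arXiv:1611.07144 — 3 statements merged into one kernel-verified Lean document; each statement's English description precedes it below -/
import Mathlib

section
/- Let p be an odd prime, S a power of 2 with 2S dividing p − 1, and η ∈ 𝔽_p a primitive 2S-th root of unity; set ω = η². Then for any f = Σ_{i=0}^{S−1} a_i X^i ∈ 𝔽_p[X], the DFT values satisfy f(ω^i) = η^{i²} · h_i for each 0 ≤ i < S, where h = (Σ_i η^{i²} a_i X^i) · (Σ_i η^{−i²} X^i) computed in 𝔽_p[X]/(X^S − 1) and h_i is the coefficient of X^i in h. -/
/-!
Since `2ij = i² + j² - (i - j)²`, we have `ω^{ij} = η^{i²} η^{j²} η^{-(i-j)²}`. In the cyclic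
convolution the partner of `j` is the residue `k` of `i - j` mod `S` rather than `i - j` itself;
this does not matter because for even `S`, `x ≡ y [ZMOD S]` gives `x² ≡ y² [ZMOD 2S]`, and
`η^{2S} = 1`.
-/

theorem Int.sq_modEq_sq_of_modEq {S x y : ℤ} (hS : 2 ∣ S) (h : x ≡ y [ZMOD S]) :
    x ^ 2 ≡ y ^ 2 [ZMOD 2 * S] := by
  obtain ⟨m, hm⟩ := Int.modEq_iff_dvd.mp h
  obtain ⟨t, rfl⟩ := hS
  refine Int.modEq_iff_dvd.mpr ⟨m * (t * m + x), ?_⟩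
  rw [show y = x + 2 * t * m by linarith]
  ring

theorem zpow_sq_eq_zpow_sq_of_modEq {G : Type*} [Group G] {η : G} {S : ℕ} (hS : 2 ∣ S)
    (hη : η ^ (2 * S) = 1) {x y : ℤ} (h : x ≡ y [ZMOD S]) : η ^ (x ^ 2) = η ^ (y ^ 2) :=
  zpow_eq_zpow_iff_modEq.mpr <|
    (Int.sq_modEq_sq_of_modEq (Int.natCast_dvd_natCast.mpr hS) h).of_dvd <|
      mod_cast orderOf_dvd_of_pow_eq_one hη

theorem zpow_two_mul_mul {G : Type*} [CommGroup G] (η : G) (x y : ℤ) :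
    η ^ (2 * (x * y)) = η ^ (x ^ 2) * η ^ (y ^ 2) * η ^ (-(x - y) ^ 2) := by
  rw [← zpow_add, ← zpow_add]
  congr 1
  ring

theorem Fin.val_sub_modEq {S : ℕ} (i j : Fin S) : ((i - j : Fin S) : ℤ) ≡ i - j [ZMOD S] := by
  rw [Fin.val_sub, Int.natCast_mod, Nat.cast_add, Nat.cast_sub j.isLt.le]
  refine (Int.mod_modEq _ _).trans ?_
  exact Int.modEq_iff_dvd.mpr ⟨-1, by ring⟩

theorem Units.pow_two_mul_eq_chirp {R : Type*} [CommMonoid R] {η : Rˣ} {S : ℕ} (hS : 2 ∣ S)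
    (hη : η ^ (2 * S) = 1) (i j : Fin S) :
    η ^ (2 * (i.val * j.val)) =
      η ^ (i.val ^ 2) * η ^ (j.val ^ 2) * η ^ (-((i - j).val ^ 2 : ℤ)) := by
  have := zpow_two_mul_mul η i j
  rw [zpow_neg, ← zpow_sq_eq_zpow_sq_of_modEq hS hη (Fin.val_sub_modEq i j), ← zpow_neg]
    at this
  exact_mod_cast this

theorem Fin.sum_ite_add_mod_eq {M : Type*} [AddCommMonoid M] {S : ℕ} (i j : Fin S)
    (f : Fin S → M) :
    (∑ k : Fin S, if (j.val + k.val) % S = i.val then f k else 0) = f (i - j) := by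
  have : NeZero S := NeZero.of_pos i.pos
  have hcond (k : Fin S) : (j.val + k.val) % S = i.val ↔ k = i - j := by
    rw [← Fin.val_add, Fin.val_inj, eq_sub_iff_add_eq, add_comm]
  simp only [hcond, Finset.sum_ite_eq', Finset.mem_univ, if_true]

theorem sum_mul_pow_eq_chirp_mul_cyclicConv {R : Type*} [CommSemiring R] {S : ℕ} (hS : 2 ∣ S)
    {η : Rˣ} (hη : η ^ (2 * S) = 1) (a : Fin S → R) (i : Fin S) :
    (∑ j : Fin S, a j * ((η : R) ^ 2) ^ (i.val * j.val)) =
      (η : R) ^ (i.val ^ 2) *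
        ∑ j₁ : Fin S, ∑ j₂ : Fin S,
          if (j₁.val + j₂.val) % S = i.val then
            ((η : R) ^ (j₁.val ^ 2) * a j₁) * ((η ^ (-(j₂.val ^ 2 : ℤ)) : Rˣ) : R)
          else 0 := by
  rw [Finset.mul_sum]
  refine Finset.sum_congr rfl fun j _ => ?_
  rw [Fin.sum_ite_add_mod_eq, ← pow_mul, ← Units.val_pow_eq_pow_val,
    Units.pow_two_mul_eq_chirp hS hη i j]
  push_cast
  ring

theorem bluestein_general (p : ℕ) (s S : ℕ) (hS : S = 2 ^ s)
    (η : (ZMod p)ˣ) (hη : orderOf η = 2 * S)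
    (a : Fin S → ZMod p) (i : Fin S) :
    (∑ j : Fin S, a j * ((η : ZMod p) ^ 2) ^ (i.val * j.val)) =
      (η : ZMod p) ^ (i.val ^ 2) *
        ∑ j₁ : Fin S, ∑ j₂ : Fin S,
          if (j₁.val + j₂.val) % S = i.val then
            ((η : ZMod p) ^ (j₁.val ^ 2) * a j₁) * ((η ^ (-(j₂.val ^ 2 : ℤ)) : (ZMod p)ˣ) : ZMod p)
          else 0 := by
  obtain rfl | hs := eq_or_ne s 0
  · rw [pow_zero] at hS
    subst hS
    simp [Subsingleton.elim i 0]
  exact sum_mul_pow_eq_chirp_mul_cyclicConv (hS ▸ dvd_pow_self 2 hs)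
    (hη ▸ pow_orderOf_eq_one η) a i

/-- Bluestein's trick: Let `p` be an odd prime, `S = 2^s` with `2S ∣ p - 1`,
and `η ∈ 𝔽_p^×` a primitive `2S`-th root of unity; set `ω = η²`.  For any
`f = Σ_{j<S} a_j X^j`, the DFT values satisfy `f(ω^i) = η^{i²} · h_i`, where `h_i` is the
`i`-th coefficient of the cyclic convolution (product in `𝔽_p[X]/(X^S - 1)`) of
`Σ_j η^{j²} a_j X^j` and `Σ_j η^{-j²} X^j`. -/
theorem bluestein (p : ℕ) (hp : p.Prime) (hodd : Odd p) (s S : ℕ) (hS : S = 2 ^ s)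
    (hdvd : 2 * S ∣ p - 1) (η : (ZMod p)ˣ) (hη : orderOf η = 2 * S)
    (a : Fin S → ZMod p) (i : Fin S) :
    (∑ j : Fin S, a j * ((η : ZMod p) ^ 2) ^ (i.val * j.val)) =
      (η : ZMod p) ^ (i.val ^ 2) *
        ∑ j₁ : Fin S, ∑ j₂ : Fin S,
          if (j₁.val + j₂.val) % S = i.val then
            ((η : ZMod p) ^ (j₁.val ^ 2) * a j₁) * ((η ^ (-(j₂.val ^ 2 : ℤ)) : (ZMod p)ˣ) : ZMod p)
          else 0 :=
  bluestein_general p s S hS η hη a i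
end

section
/- Define lg x = ⌈log₂ x⌉. Let β ≥ 16 be a real number and set k' = ⌈β / (lg β − 3·lg lg β)³⌉ (assuming lg β − 3·lg lg β > 0) and m' = k'·(lg k')³. Then m' ≥ β. -/
/-!
Put `d = lg β - 3·lg lg β`, so that `k' ≥ β / d³`. Since `0 < d ≤ lg β`, also `k' ≥ β / (lg β)³`,
and taking `lg` gives `lg k' ≥ lg β - 3·lg lg β = d` (the ceiling commutes with the integer
shift `3·lg lg β`, and `log₂ lg β ≤ lg lg β`). Hence `m' = k'·(lg k')³ ≥ k'·d³ ≥ β`.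
-/

noncomputable def lg (x : ℝ) : ℤ := ⌈Real.logb 2 x⌉

lemma lg_pos {x : ℝ} (hx : 1 < x) : 0 < lg x :=
  Int.ceil_pos.2 (Real.logb_pos one_lt_two hx)

lemma lg_nonneg {x : ℝ} (hx : 1 ≤ x) : 0 ≤ lg x :=
  Int.ceil_nonneg (Real.logb_nonneg one_lt_two hx)

lemma lg_le_lg {x y : ℝ} (hx : 0 < x) (hxy : x ≤ y) : lg x ≤ lg y :=
  Int.ceil_mono (Real.logb_le_logb_of_le one_lt_two hx hxy)

lemma lg_sub_mul_lg_le_lg_div_pow {x y : ℝ} (hx : 0 < x) (hy : 0 < y) (n : ℕ) :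
    lg x - n * lg y ≤ lg (x / y ^ n) := by
  unfold lg
  rw [Real.logb_div hx.ne' (pow_pos hy n).ne', Real.logb_pow,
    ← Int.ceil_sub_intCast, Int.cast_mul, Int.cast_natCast]
  exact Int.ceil_mono (by gcongr; exact Int.le_ceil _)

/-- Let `β ≥ 16`, and (assuming `lg β - 3·lg lg β > 0`) set
`k' = ⌈β / (lg β - 3·lg lg β)³⌉` and `m' = k'·(lg k')³`.  Then `m' ≥ β`. -/
theorem mprime_ge_beta (β : ℝ) (hβ : 16 ≤ β)
    (hpos : 0 < (lg β : ℝ) - 3 * (lg (lg β : ℝ) : ℝ))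
    (k' : ℤ) (hk' : k' = ⌈β / ((lg β : ℝ) - 3 * (lg (lg β : ℝ) : ℝ)) ^ 3⌉)
    (m' : ℤ) (hm' : m' = k' * (lg (k' : ℝ)) ^ 3) :
    β ≤ (m' : ℝ) := by
  have hβ_pos : 0 < β := by linarith
  set A := lg β
  set d : ℤ := A - 3 * lg A with hd
  have hd_pos : (0 : ℝ) < d := by rw [hd]; push_cast; exact hpos
  have hdA : d ≤ A := by
    have := lg_nonneg (x := A) (by exact_mod_cast lg_pos (by linarith))
    omega
  have hk : β / (d : ℝ) ^ 3 ≤ k' := by rw [hk', hd]; push_cast; exact Int.le_ceil _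
  have hk_pos : (0 : ℝ) < k' := lt_of_lt_of_le (by positivity) hk
  have hdA' : (d : ℝ) ≤ A := by exact_mod_cast hdA
  have hA_pos : (0 : ℝ) < A := hd_pos.trans_le hdA'
  have hlgk : d ≤ lg k' :=
    calc d ≤ lg (β / (A : ℝ) ^ 3) := by
          have := lg_sub_mul_lg_le_lg_div_pow hβ_pos hA_pos 3
          push_cast at this
          omega
      _ ≤ lg k' := by
          refine lg_le_lg (by positivity) (le_trans ?_ hk)
          gcongr
  calc β ≤ k' * (d : ℝ) ^ 3 := (div_le_iff₀ (by positivity)).1 hk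
    _ ≤ k' * (lg k' : ℝ) ^ 3 := by gcongr
    _ = m' := by rw [hm']; push_cast; rfl
end

section
/- Suppose T : ℕ → ℝ≥0, B > 0, m₀ ∈ ℕ, and suppose: (a) T(m) ≤ B for all m ≤ m₀; (b) for each m > m₀ there exists m' with log*((m')^{1/8}) ≤ log*(m^{1/8}) − 1 such that T(m) < (4 + 4^{−log*(m^{1/8})})·T(m') + B. Then T(m) < (4^{log*(m^{1/8})+1} − 1)·B for all m ≥ 2. -/
/-!
Induction on the level `s = log*(m^{1/8})`: below `m₀` the bound holds outright, and otherwise the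
recursion drops to level at most `s - 1`, where the bound `(4^s - 1) B` is available, and
`(4 + 4^{-s}) (4^s - 1) + 1 = 4^{s+1} - 4^{-s} - 2 < 4^{s+1} - 1`.
-/

/-- The iterated logarithm: `log* x = min {j : ℕ | log^[j] x ≤ 1}`. -/
noncomputable def logStar (x : ℝ) : ℕ := sInf {j : ℕ | Real.log^[j] x ≤ 1}

theorem four_add_zpow_neg_mul_add_one_lt (s : ℕ) :
    (4 + (4 : ℝ) ^ (-(s : ℤ))) * ((4 : ℝ) ^ s - 1) + 1 < (4 : ℝ) ^ (s + 1) - 1 := by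
  have hinv : (4 : ℝ) ^ (-(s : ℤ)) * (4 : ℝ) ^ s = 1 := by
    rw [zpow_neg, zpow_natCast, inv_mul_cancel₀ (by positivity)]
  have hpos : (0 : ℝ) < (4 : ℝ) ^ (-(s : ℤ)) := by positivity
  nlinarith [pow_succ (4 : ℝ) s]

theorem lt_of_level_recursion {α : Type*} (ℓ : α → ℕ) (T : α → ℝ) (B : ℝ) (hB : 0 < B)
    (P : α → Prop) (base : ∀ m, P m → T m ≤ B)
    (step : ∀ m, ¬ P m → ∃ m', ℓ m' + 1 ≤ ℓ m ∧
      T m < (4 + (4 : ℝ) ^ (-(ℓ m : ℤ))) * T m' + B) (m : α) :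
    T m < ((4 : ℝ) ^ (ℓ m + 1) - 1) * B := by
  induction hs : ℓ m using Nat.strong_induction_on generalizing m with
  | _ s ih =>
    subst hs
    by_cases hm : P m
    · have : (4 : ℝ) ^ 1 ≤ (4 : ℝ) ^ (ℓ m + 1) := pow_le_pow_right₀ (by norm_num) (by omega)
      nlinarith [base m hm]
    · obtain ⟨m', hlevel, hrec⟩ := step m hm
      have hm' : T m' < ((4 : ℝ) ^ ℓ m - 1) * B := by
        have : (4 : ℝ) ^ (ℓ m' + 1) ≤ (4 : ℝ) ^ ℓ m := pow_le_pow_right₀ (by norm_num) hlevel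
        nlinarith [ih (ℓ m') (by omega) m' rfl]
      have hcoeff : (0 : ℝ) < 4 + (4 : ℝ) ^ (-(ℓ m : ℤ)) := by positivity
      calc T m < (4 + (4 : ℝ) ^ (-(ℓ m : ℤ))) * T m' + B := hrec
        _ ≤ ((4 + (4 : ℝ) ^ (-(ℓ m : ℤ))) * ((4 : ℝ) ^ ℓ m - 1) + 1) * B := by nlinarith
        _ ≤ ((4 : ℝ) ^ (ℓ m + 1) - 1) * B := by
          gcongr; exact (four_add_zpow_neg_mul_add_one_lt _).le

theorem recursion_bound_general (T : ℕ → ℝ) (B : ℝ) (hB : 0 < B) (m₀ : ℕ)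
    (base : ∀ m ≤ m₀, T m ≤ B)
    (step : ∀ m, m₀ < m → ∃ m' : ℕ,
      logStar ((m' : ℝ) ^ ((1 : ℝ) / 8)) + 1 ≤ logStar ((m : ℝ) ^ ((1 : ℝ) / 8)) ∧
      T m < (4 + (4 : ℝ) ^ (-(logStar ((m : ℝ) ^ ((1 : ℝ) / 8)) : ℤ))) * T m' + B) :
    ∀ m : ℕ, 2 ≤ m →
      T m < ((4 : ℝ) ^ (logStar ((m : ℝ) ^ ((1 : ℝ) / 8)) + 1) - 1) * B := fun m _ =>
  lt_of_level_recursion (fun m : ℕ => logStar ((m : ℝ) ^ ((1 : ℝ) / 8))) T B hB (· ≤ m₀) base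
    (fun m hm => step m (not_le.mp hm)) m

/-- Suppose `T : ℕ → ℝ≥0`, `B > 0`, `m₀ ∈ ℕ` satisfy:
(a) `T m ≤ B` for all `m ≤ m₀`;
(b) for each `m > m₀` there exists `m'` with `log*((m')^{1/8}) ≤ log*(m^{1/8}) - 1`
    and `T m < (4 + 4^{-log*(m^{1/8})})·T m' + B`.
Then `T m < (4^{log*(m^{1/8}) + 1} - 1)·B` for all `m ≥ 2`. -/
theorem recursion_bound (T : ℕ → ℝ) (hT : ∀ m, 0 ≤ T m) (B : ℝ) (hB : 0 < B) (m₀ : ℕ)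
    (base : ∀ m ≤ m₀, T m ≤ B)
    (step : ∀ m, m₀ < m → ∃ m' : ℕ,
      logStar ((m' : ℝ) ^ ((1 : ℝ) / 8)) + 1 ≤ logStar ((m : ℝ) ^ ((1 : ℝ) / 8)) ∧
      T m < (4 + (4 : ℝ) ^ (-(logStar ((m : ℝ) ^ ((1 : ℝ) / 8)) : ℤ))) * T m' + B) :
    ∀ m : ℕ, 2 ≤ m →
      T m < ((4 : ℝ) ^ (logStar ((m : ℝ) ^ ((1 : ℝ) / 8)) + 1) - 1) * B :=
  recursion_bound_general T B hB m₀ base step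
end
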